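/- Let x₁, ..., x_N ∈ ℝ^D be vectors and define the N×N matrix A by A_{ij} = x_i ⊙ x_j, where u ⊙ v = Σ_{k=1}^D sign(u_k v_k)·min(|u_k|, |v_k|). Then A is symmetric and positive semi-definite. -/

import Mathlib

/-!
On each coordinate the kernel is a Gram kernel: `sign (a * b) * min |a| |b|` is the `L²(ℝ)` inner
product of `sign a • 𝟙_(0, |a|]` and `sign b • 𝟙_(0, |b|]`. Gram matrices are positive
semidefinite, and so is their sum over the coordinates.
-/

open MeasureTheory

lemma Real.sign_mul (a b : ℝ) : Real.sign (a * b) = Real.sign a * Real.sign b := by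
  rcases lt_trichotomy a 0 with ha | rfl | ha
  all_goals rcases lt_trichotomy b 0 with hb | rfl | hb
  all_goals simp [*, Real.sign_of_pos, Real.sign_of_neg, mul_pos_of_neg_of_neg,
      mul_neg_of_pos_of_neg, mul_neg_of_neg_of_pos]

noncomputable def signedIndicatorLp (a : ℝ) : Lp ℝ 2 (volume : Measure ℝ) :=
  indicatorConstLp 2 (measurableSet_Ioc (a := 0) (b := |a|)) measure_Ioc_lt_top.ne (Real.sign a)

lemma inner_signedIndicatorLp (a b : ℝ) :
    inner ℝ (signedIndicatorLp a) (signedIndicatorLp b) = Real.sign (a * b) * min |a| |b| := by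
  rw [signedIndicatorLp, signedIndicatorLp,
    L2.inner_indicatorConstLp_indicatorConstLp _ _ measure_Ioc_lt_top.ne measure_Ioc_lt_top.ne,
    Set.Ioc_inter_Ioc, max_self, Real.volume_real_Ioc_of_le (le_min (abs_nonneg a) (abs_nonneg b)),
    sub_zero, RCLike.inner_apply', conj_trivial, Real.sign_mul, smul_eq_mul, mul_comm]

lemma Matrix.posSemidef_of_sign_mul_min_abs {ι : Type*} [Finite ι] (a : ι → ℝ) :
    (Matrix.of fun i j => Real.sign (a i * a j) * min |a i| |a j|).PosSemidef := by
  have hgram : (Matrix.of fun i j => Real.sign (a i * a j) * min |a i| |a j|) =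
      Matrix.gram ℝ (fun i => signedIndicatorLp (a i)) := by
    ext i j
    rw [Matrix.gram_apply, inner_signedIndicatorLp, Matrix.of_apply]
  exact hgram ▸ Matrix.posSemidef_gram ℝ _

theorem mf_covariance_posSemidef (N D : ℕ) (x : Fin N → Fin D → ℝ) :
    (Matrix.of fun i j => ∑ k, Real.sign (x i k * x j k) * min |x i k| |x j k|).IsSymm ∧
    (Matrix.of fun i j => ∑ k, Real.sign (x i k * x j k) * min |x i k| |x j k|).PosSemidef := by
  have hsum : (Matrix.of fun i j => ∑ k, Real.sign (x i k * x j k) * min |x i k| |x j k|) =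
      ∑ k, Matrix.of fun i j => Real.sign (x i k * x j k) * min |x i k| |x j k| := by
    ext i j
    simp only [Matrix.of_apply, Matrix.sum_apply]
  have hpsd :
      (Matrix.of fun i j => ∑ k, Real.sign (x i k * x j k) * min |x i k| |x j k|).PosSemidef :=
    hsum ▸ Matrix.posSemidef_sum _ fun k _ => Matrix.posSemidef_of_sign_mul_min_abs (x · k)
  exact ⟨Matrix.isHermitian_iff_isSymm.mp hpsd.isHermitian, hpsd⟩
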